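/- (δ-tightness of the relaxed Neyman–Pearson bound.) In the setting of the relaxed Neyman–Pearson bound—finite Ω, PMFs p, q, partition L₁,...,L_m with constant likelihood ratios in decreasing order, B ⊆ {1,...,m}, lb the full greedy lower bound with budget p*, and lb_δ the greedy lower bound over {Lᵢ}_{i∈B} with budget p* - ∑_{i∉B} p(Lᵢ)—let δ = ∑_{i ∉ B} q(Lᵢ). Then lb ≤ lb_δ + δ. -/

import Mathlib

/-! Writing `P i = η i * Q i`, the greedy bound is the value of the fractional knapsack
problem `min ∑ x i * Q i` subject to `∑ x i * P i ≥ b`, `0 ≤ x ≤ 1`: since `η` decreases, an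
exchange argument shows that no feasible `x` costs less than the greedy solution. Taking the
greedy solution on `B` and all of `Bᶜ` gives a feasible point of the full problem whose cost
is `lb_δ + δ`. If the reduced budget cannot be met at all, the full budget cannot be met
either, and both bounds are `0`. -/

open Finset
open scoped Classical

/-- The greedy lower bound for an ordered family `S` of subspaces with `p`-masses `P`,
`q`-masses `Q`, likelihood ratios `η`, and budget `b` (see the paper): `0` if the
budget is nonpositive or cannot be met. -/
noncomputable def greedyLB {m : ℕ} (S : Finset (Fin m)) (P Q η : Fin m → ℝ) (b : ℝ) : ℝ :=
  if hb : 0 < b ∧ (S.filter (fun i => b ≤ ∑ j ∈ S.filter (· ≤ i), P j)).Nonempty then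
    (∑ j ∈ S.filter (· < (S.filter (fun i => b ≤ ∑ j ∈ S.filter (· ≤ i), P j)).min' hb.2), Q j)
      + (b - ∑ j ∈ S.filter (· < (S.filter (fun i => b ≤ ∑ j ∈ S.filter (· ≤ i), P j)).min' hb.2), P j)
        / η ((S.filter (fun i => b ≤ ∑ j ∈ S.filter (· ≤ i), P j)).min' hb.2)
  else 0

/-- `greedyLB` stops at the least element of this set. -/
noncomputable def budgetReached {m : ℕ} (S : Finset (Fin m)) (P : Fin m → ℝ) (b : ℝ) :
    Finset (Fin m) :=
  S.filter fun i => b ≤ ∑ j ∈ S.filter (· ≤ i), P j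

section Greedy

variable {m : ℕ} {S : Finset (Fin m)} {P Q η : Fin m → ℝ} {b : ℝ}

lemma filter_le_eq_insert_filter_lt {k : Fin m} (hk : k ∈ S) :
    S.filter (· ≤ k) = insert k (S.filter (· < k)) := by
  ext j
  simp only [mem_filter, mem_insert, le_iff_lt_or_eq]
  aesop

lemma budgetReached_nonempty (hb : 0 < b) (hS : b ≤ ∑ i ∈ S, P i) :
    (budgetReached S P b).Nonempty := by
  obtain ⟨i, hi⟩ : S.Nonempty := nonempty_of_sum_ne_zero (f := P) (by linarith)
  refine ⟨S.max' ⟨i, hi⟩, mem_filter.2 ⟨max'_mem _ _, ?_⟩⟩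
  rwa [filter_true_of_mem fun j hj => le_max' S j hj]

lemma sum_filter_lt_min'_budgetReached_lt (hb : 0 < b) (hR : (budgetReached S P b).Nonempty) :
    ∑ j ∈ S.filter (· < (budgetReached S P b).min' hR), P j < b := by
  set k := (budgetReached S P b).min' hR
  by_contra! hkb
  obtain hT | hT := (S.filter (· < k)).eq_empty_or_nonempty
  · rw [hT, sum_empty] at hkb
    linarith
  -- the last subspace before `k` would already reach the budget
  set i := (S.filter (· < k)).max' hT
  obtain ⟨hiS, hik⟩ := mem_filter.1 (max'_mem _ hT)
  have hprefix : S.filter (· ≤ i) = S.filter (· < k) := by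
    ext j
    simp only [mem_filter, and_congr_right_iff]
    exact fun hj => ⟨fun hji => hji.trans_lt hik, fun hjk => le_max' _ j (mem_filter.2 ⟨hj, hjk⟩)⟩
  have hi : i ∈ budgetReached S P b := mem_filter.2 ⟨hiS, hprefix ▸ hkb⟩
  exact (min'_le _ i hi).not_gt hik

lemma exists_index_greedyLB_eq (hb : 0 < b) (hR : (budgetReached S P b).Nonempty) :
    ∃ k ∈ S, ∑ j ∈ S.filter (· < k), P j < b ∧ b ≤ ∑ j ∈ S.filter (· < k), P j + P k ∧
      greedyLB S P Q η b =
        ∑ j ∈ S.filter (· < k), Q j + (b - ∑ j ∈ S.filter (· < k), P j) / η k := by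
  obtain ⟨hkS, hkb⟩ := mem_filter.1 ((budgetReached S P b).min'_mem hR)
  set k := (budgetReached S P b).min' hR
  refine ⟨k, hkS, sum_filter_lt_min'_budgetReached_lt hb hR, ?_, dif_pos ⟨hb, hR⟩⟩
  rwa [filter_le_eq_insert_filter_lt hkS, sum_insert (by simp), add_comm] at hkb

lemma greedyLB_eq_zero_of_not_reached (h : ¬(0 < b ∧ (budgetReached S P b).Nonempty)) :
    greedyLB S P Q η b = 0 :=
  dif_neg h

lemma greedyLB_eq_zero_of_sum_lt (hP : ∀ i, 0 ≤ P i) (hS : ∑ i ∈ S, P i < b) :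
    greedyLB S P Q η b = 0 := by
  refine greedyLB_eq_zero_of_not_reached fun ⟨_, i, hi⟩ => ?_
  have hprefix : ∑ j ∈ S.filter (· ≤ i), P j ≤ ∑ j ∈ S, P j :=
    sum_le_sum_of_subset_of_nonneg (filter_subset _ _) fun j _ _ => hP j
  linarith [(mem_filter.1 hi).2]

lemma greedyLB_le_sum_mul (hPQ : ∀ i, P i = η i * Q i) (hQ : ∀ i, 0 ≤ Q i) (hη : Antitone η)
    {x : Fin m → ℝ} (hx : ∀ i, x i ∈ Set.Icc 0 1) (hfeas : b ≤ ∑ i ∈ S, x i * P i) :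
    greedyLB S P Q η b ≤ ∑ i ∈ S, x i * Q i := by
  by_cases hreached : 0 < b ∧ (budgetReached S P b).Nonempty
  swap
  · rw [greedyLB_eq_zero_of_not_reached hreached]
    exact sum_nonneg fun i _ => mul_nonneg (hx i).1 (hQ i)
  obtain ⟨k, -, hlt, hle, hLB⟩ := exists_index_greedyLB_eq (Q := Q) (η := η) hreached.1 hreached.2
  have hηk : 0 < η k := pos_of_mul_pos_left (hPQ k ▸ (by linarith : 0 < P k)) (hQ k)
  -- relative to the greedy selection, every subspace trades `P`-mass for `Q`-mass at rate `η k`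
  -- or worse
  have hexchange : ∀ i ∈ S, x i * P i - (if i < k then P i else 0) ≤
      η k * (x i * Q i - if i < k then Q i else 0) := by
    intro i _
    rw [hPQ i]
    split_ifs with hik
    · nlinarith [mul_nonneg (mul_nonneg (sub_nonneg.2 (hx i).2) (sub_nonneg.2 (hη hik.le))) (hQ i)]
    · nlinarith [mul_nonneg (mul_nonneg (hx i).1 (sub_nonneg.2 (hη (not_lt.1 hik)))) (hQ i)]
  have hsum := sum_le_sum hexchange
  rw [← mul_sum, sum_sub_distrib, sum_sub_distrib, ← sum_filter, ← sum_filter] at hsum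
  rw [hLB, ← le_sub_iff_add_le', div_le_iff₀ hηk, mul_comm]
  linarith

lemma exists_sum_mul_eq_greedyLB (hPQ : ∀ i, P i = η i * Q i) (hS : b ≤ ∑ i ∈ S, P i) :
    ∃ x : Fin m → ℝ, (∀ i, x i ∈ Set.Icc 0 1) ∧ b ≤ ∑ i ∈ S, x i * P i ∧
      ∑ i ∈ S, x i * Q i = greedyLB S P Q η b := by
  obtain hb | hb := le_or_gt b 0
  · refine ⟨0, fun _ => ⟨le_rfl, zero_le_one⟩, by simpa using hb, ?_⟩
    rw [greedyLB_eq_zero_of_not_reached fun h => hb.not_gt h.1]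
    simp
  obtain ⟨k, hkS, hlt, hle, hLB⟩ :=
    exists_index_greedyLB_eq (Q := Q) (η := η) hb (budgetReached_nonempty hb hS)
  set r := b - ∑ j ∈ S.filter (· < k), P j
  have hr : 0 < r := sub_pos.2 hlt
  have hrP : r ≤ P k := by linarith
  have hPk : 0 < P k := hr.trans_le hrP
  have hηQ : η k ≠ 0 ∧ Q k ≠ 0 := mul_ne_zero_iff.1 (hPQ k ▸ hPk.ne')
  set x : Fin m → ℝ := fun i => if i < k then 1 else if i = k then r / P k else 0
  have hxsum : ∀ g : Fin m → ℝ,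
      ∑ i ∈ S, x i * g i = ∑ i ∈ S.filter (· < k), g i + r / P k * g k := by
    intro g
    have hk := sum_ite_eq' S k fun _ => r / P k * g k
    rw [if_pos hkS] at hk
    rw [sum_filter, ← hk, ← sum_add_distrib]
    refine sum_congr rfl fun i _ => ?_
    simp only [x]
    split_ifs <;> simp_all
  refine ⟨x, fun i => ?_, ?_, ?_⟩
  · simp only [x]
    split_ifs
    exacts [⟨zero_le_one, le_rfl⟩, ⟨by positivity, (div_le_one hPk).2 hrP⟩, ⟨le_rfl, zero_le_one⟩]
  · rw [hxsum, div_mul_cancel₀ r hPk.ne']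
    simp only [r]
    linarith
  · rw [hxsum, hLB, hPQ k]
    field_simp [hηQ.1, hηQ.2]

end Greedy

lemma sum_piecewise_one_mul {ι : Type*} [Fintype ι] [DecidableEq ι] (B : Finset ι)
    (x g : ι → ℝ) : ∑ i, B.piecewise x 1 i * g i = ∑ i ∈ B, x i * g i + ∑ i ∈ Bᶜ, g i := by
  rw [← sum_add_sum_compl B]
  congr 1
  · exact sum_congr rfl fun i hi => by rw [piecewise_eq_of_mem _ _ _ hi]
  · refine sum_congr rfl fun i hi => ?_
    rw [piecewise_eq_of_notMem _ _ _ (mem_compl.1 hi), Pi.one_apply, one_mul]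

theorem relaxed_np_delta_tightness_general
    (Ω : Type*) [Fintype Ω] (p q : Ω → ℝ)
    (hp0 : ∀ o, 0 ≤ p o) (hq0 : ∀ o, 0 ≤ q o)
    (m : ℕ) (L : Fin m → Finset Ω)
    (η : Fin m → ℝ)
    (hratio : ∀ i : Fin m, ∀ o ∈ L i, p o = η i * q o)
    (hmono : ∀ i j : Fin m, i ≤ j → η j ≤ η i)
    (P Q : Fin m → ℝ)
    (hP : ∀ i, P i = ∑ o ∈ L i, p o) (hQ : ∀ i, Q i = ∑ o ∈ L i, q o)
    (pstar : ℝ)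
    (B : Finset (Fin m)) (δ : ℝ) (hδ : δ = ∑ i ∈ Bᶜ, Q i) :
    greedyLB Finset.univ P Q η pstar ≤
      greedyLB B P Q η (pstar - ∑ i ∈ Bᶜ, P i) + δ := by
  have hPnn : ∀ i, 0 ≤ P i := fun i => hP i ▸ sum_nonneg fun o _ => hp0 o
  have hQnn : ∀ i, 0 ≤ Q i := fun i => hQ i ▸ sum_nonneg fun o _ => hq0 o
  have hPQ : ∀ i, P i = η i * Q i := fun i => by
    rw [hP i, hQ i, mul_sum]
    exact sum_congr rfl (hratio i)
  by_cases hreach : pstar - ∑ i ∈ Bᶜ, P i ≤ ∑ i ∈ B, P i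
  · obtain ⟨x, hx, hxP, hxQ⟩ := exists_sum_mul_eq_greedyLB hPQ hreach
    have hx' : ∀ i, B.piecewise x 1 i ∈ Set.Icc (0 : ℝ) 1 := fun i =>
      B.piecewise_cases x 1 (· ∈ Set.Icc (0 : ℝ) 1) (hx i) ⟨zero_le_one, le_rfl⟩
    calc greedyLB univ P Q η pstar ≤ ∑ i, B.piecewise x 1 i * Q i :=
          greedyLB_le_sum_mul hPQ hQnn hmono hx' (by rw [sum_piecewise_one_mul]; linarith)
      _ = greedyLB B P Q η (pstar - ∑ i ∈ Bᶜ, P i) + δ := by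
          rw [sum_piecewise_one_mul, hxQ, hδ]
  · have hunreach : ∑ i, P i < pstar := by
      rw [← sum_add_sum_compl B]
      linarith
    rw [greedyLB_eq_zero_of_sum_lt hPnn hunreach, greedyLB_eq_zero_of_sum_lt hPnn (not_le.1 hreach),
      zero_add, hδ]
    exact sum_nonneg fun i _ => hQnn i

/-- δ-tightness of the relaxed Neyman–Pearson bound: the loss incurred by discarding
the subspaces outside `B` (and reducing the budget by their `p`-mass) is at most
their total `q`-mass `δ`: `lb ≤ lb_δ + δ`. -/
theorem relaxed_np_delta_tightness
    (Ω : Type*) [Fintype Ω] (p q : Ω → ℝ)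
    (hp0 : ∀ o, 0 ≤ p o) (hq0 : ∀ o, 0 ≤ q o)
    (hp1 : ∑ o, p o = 1) (hq1 : ∑ o, q o = 1)
    (m : ℕ) (L : Fin m → Finset Ω)
    (hpart : ∀ o : Ω, ∃! i : Fin m, o ∈ L i)
    (η : Fin m → ℝ)
    (hratio : ∀ i : Fin m, ∀ o ∈ L i, p o = η i * q o)
    (hmono : ∀ i j : Fin m, i ≤ j → η j ≤ η i)
    (P Q : Fin m → ℝ)
    (hP : ∀ i, P i = ∑ o ∈ L i, p o) (hQ : ∀ i, Q i = ∑ o ∈ L i, q o)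
    (pstar : ℝ) (hps0 : 0 ≤ pstar) (hps1 : pstar ≤ 1)
    (B : Finset (Fin m)) (δ : ℝ) (hδ : δ = ∑ i ∈ Bᶜ, Q i) :
    greedyLB Finset.univ P Q η pstar ≤
      greedyLB B P Q η (pstar - ∑ i ∈ Bᶜ, P i) + δ :=
  relaxed_np_delta_tightness_general Ω p q hp0 hq0 m L η hratio hmono P Q hP hQ pstar B δ hδ
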